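/- arXiv:1602.05605 — 4 statements merged into one kernel-verified Lean document; each statement's English description precedes it below -/
import Mathlib

section
/- If f and g are both α-differentiable at t > 0 (α ∈ (0,1]), then T_α(f·g)(t) = f(t)·(T_α g)(t) + g(t)·(T_α f)(t). -/
def HasConfDerivAt (α : ℝ) (f : ℝ → ℝ) (t L : ℝ) : Prop :=
  Filter.Tendsto (fun ε : ℝ => (f (t + ε * t ^ (1 - α)) - f t) / ε)
    (nhdsWithin 0 {0}ᶜ) (nhds L)

theorem hasConfDerivAt_iff_hasDerivAt {α : ℝ} {f : ℝ → ℝ} {t L : ℝ} :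
    HasConfDerivAt α f t L ↔ HasDerivAt (fun ε => f (t + ε * t ^ (1 - α))) L 0 := by
  simp [HasConfDerivAt, hasDerivAt_iff_tendsto_slope_zero, div_eq_inv_mul]

theorem conf_deriv_mul_general (α : ℝ)
    (f g : ℝ → ℝ) (t Lf Lg : ℝ)
    (hf : HasConfDerivAt α f t Lf) (hg : HasConfDerivAt α g t Lg) :
    HasConfDerivAt α (fun s => f s * g s) t (f t * Lg + g t * Lf) := by
  rw [hasConfDerivAt_iff_hasDerivAt] at hf hg ⊢
  refine (hf.fun_mul hg).congr_deriv ?_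
  simp only [zero_mul, add_zero]
  ring

theorem conf_deriv_mul (α : ℝ) (hα : α ∈ Set.Ioc (0:ℝ) 1)
    (f g : ℝ → ℝ) (t Lf Lg : ℝ) (ht : 0 < t)
    (hf : HasConfDerivAt α f t Lf) (hg : HasConfDerivAt α g t Lg) :
    HasConfDerivAt α (fun s => f s * g s) t (f t * Lg + g t * Lf) :=
  conf_deriv_mul_general α f g t Lf Lg hf hg
end

section
/- For α ∈ (0,1], p > 0 with p/α a nonnegative integer, the conformable fractional differential transform of f(t) = (t-t₀)^p around t₀ is F_α(k) = δ(k - p/α), i.e., F_α(k) = 1 if k = p/α and 0 otherwise. Equivalently, (1/(α^k k!)) · [(T_α^{t₀})^(k) f](t₀⁺) equals 1 when k = p/α and 0 otherwise. -/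
/-! On `t > a` each application of `T_α^a` maps `c (t - a)^q` to `c q (t - a)^(q - α)`, so
`k` applications to `(t - a)^(nα)` give `α^k n(n-1)⋯(n-k+1) (t - a)^((n-k)α)`. After dividing by
`α^k k!` this is `(n choose k) (t - a)^((n-k)α)`, whose right limit at `a` is `1` for `k = n`,
`0` for `k < n` (positive exponent) and `0` for `k > n` (vanishing binomial coefficient). -/

/-- The left conformable fractional derivative operator of order `α` starting at `a`
(for differentiable functions): `(T_α^a f)(t) = (t-a)^(1-α) f'(t)`. -/
noncomputable def confD (α a : ℝ) (f : ℝ → ℝ) : ℝ → ℝ :=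
  fun t => (t - a) ^ (1 - α) * deriv f t

open Filter Set Finset Topology

section ConformableDerivative

variable {α a : ℝ}

theorem confD_const_mul (c : ℝ) (f : ℝ → ℝ) :
    confD α a (fun s => c * f s) = fun t => c * confD α a f t := by
  funext t
  simp only [confD, deriv_const_mul_field]
  ring

theorem confD_eqOn_Ioi {f g : ℝ → ℝ} (h : EqOn f g (Ioi a)) :
    EqOn (confD α a f) (confD α a g) (Ioi a) := fun t ht => by
  simp only [confD, (h.eventuallyEq_of_mem (isOpen_Ioi.mem_nhds ht)).deriv_eq]

theorem confD_rpow_sub {t : ℝ} (ht : a < t) (q : ℝ) :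
    confD α a (fun s => (s - a) ^ q) t = q * (t - a) ^ (q - α) := by
  have hpos : 0 < t - a := sub_pos.mpr ht
  calc confD α a (fun s => (s - a) ^ q) t
      = q * ((t - a) ^ (1 - α) * (t - a) ^ (q - 1)) := by
        simp only [confD, deriv_comp_sub_const (f := fun x : ℝ => x ^ q), Real.deriv_rpow_const]
        ring
    _ = q * (t - a) ^ (q - α) := by
        rw [← Real.rpow_add hpos]
        ring_nf

/-- Only on `Ioi a`: for `t ≤ a` the real powers of `t - a` do not combine additively. -/
theorem confD_iterate_rpow_sub (p : ℝ) (k : ℕ) :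
    EqOn ((confD α a)^[k] (fun s => (s - a) ^ p))
      (fun t => (∏ j ∈ range k, (p - j * α)) * (t - a) ^ (p - k * α)) (Ioi a) := by
  induction k with
  | zero => intro t _; simp
  | succ k ih =>
    intro t ht
    rw [Function.iterate_succ_apply', confD_eqOn_Ioi ih ht, confD_const_mul]
    beta_reduce
    rw [confD_rpow_sub ht, prod_range_succ]
    push_cast
    rw [show p - k * α - α = p - (k + 1) * α by ring]
    ring

end ConformableDerivative

theorem prod_range_natCast_mul_sub_mul (n k : ℕ) (α : ℝ) :
    ∏ j ∈ range k, ((n : ℝ) * α - j * α) = α ^ k * n.descFactorial k := by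
  simp_rw [← sub_mul, prod_mul_distrib, prod_const, card_range,
    ← descPochhammer_eval_eq_prod_range, descPochhammer_eval_eq_descFactorial]
  ring

theorem tendsto_choose_mul_rpow_sub {α : ℝ} (hα : 0 < α) (a : ℝ) (n k : ℕ) :
    Tendsto (fun t => (n.choose k : ℝ) * (t - a) ^ (((n : ℝ) - k) * α))
      (𝓝[>] a) (𝓝 (if k = n then 1 else 0)) := by
  rcases le_or_gt k n with hkn | hnk
  · have hexp : 0 ≤ ((n : ℝ) - k) * α :=
      mul_nonneg (sub_nonneg.mpr (by exact_mod_cast hkn)) hα.le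
    have hcont : ContinuousAt (fun t => (n.choose k : ℝ) * (t - a) ^ (((n : ℝ) - k) * α)) a :=
      ((continuous_sub_right a).continuousAt.rpow_const (Or.inr hexp)).const_mul _
    convert hcont.tendsto.mono_left nhdsWithin_le_nhds using 2
    split_ifs with hk
    · simp [hk]
    · have hk' : ((n : ℝ) - k) * α ≠ 0 :=
        mul_ne_zero (sub_ne_zero.mpr (by exact_mod_cast Ne.symm hk)) hα.ne'
      rw [sub_self, Real.zero_rpow hk', mul_zero]
  · simp [Nat.choose_eq_zero_of_lt hnk, hnk.ne']

theorem conf_transform_power_general (α : ℝ) (hα : α ∈ Set.Ioc (0:ℝ) 1)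
    (t₀ p : ℝ) (n : ℕ) (hpn : p = (n : ℝ) * α) (k : ℕ) :
    Filter.Tendsto
      (fun t => (1 / (α ^ k * (Nat.factorial k : ℝ))) * ((confD α t₀)^[k] (fun s => (s - t₀) ^ p)) t)
      (nhdsWithin t₀ (Set.Ioi t₀)) (nhds (if k = n then 1 else 0)) := by
  subst hpn
  refine (tendsto_choose_mul_rpow_sub hα.1 t₀ n k).congr' ?_
  filter_upwards [self_mem_nhdsWithin] with t ht
  rw [confD_iterate_rpow_sub _ k ht, prod_range_natCast_mul_sub_mul,
    Nat.descFactorial_eq_factorial_mul_choose]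
  have hα0 : α ≠ 0 := hα.1.ne'
  push_cast
  field_simp

theorem conf_transform_power (α : ℝ) (hα : α ∈ Set.Ioc (0:ℝ) 1)
    (t₀ p : ℝ) (n : ℕ) (hp : 0 < p) (hpn : p = (n : ℝ) * α) (k : ℕ) :
    Filter.Tendsto
      (fun t => (1 / (α ^ k * (Nat.factorial k : ℝ))) * ((confD α t₀)^[k] (fun s => (s - t₀) ^ p)) t)
      (nhdsWithin t₀ (Set.Ioi t₀)) (nhds (if k = n then 1 else 0)) :=
  conf_transform_power_general α hα t₀ p n hpn k
end

section
/- For α ∈ (0,1] and ω, c ∈ ℝ, the k-fold left conformable fractional derivative of f(t) = sin(ω(t-t₀)^α/α + c) equals ω^k · sin(ω(t-t₀)^α/α + c + kπ/2) for t > t₀; hence its conformable fractional differential transform at t₀ is F_α(k) = (ω^k/(α^k k!)) sin(kπ/2 + c). -/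
open Set Filter Topology Real

lemma confD_congr_on_Ioi {α a : ℝ} {f g : ℝ → ℝ} (h : EqOn f g (Ioi a)) :
    EqOn (confD α a f) (confD α a g) (Ioi a) := fun t ht => by
  simp only [confD, (h.eventuallyEq_of_mem (isOpen_Ioi.mem_nhds ht)).deriv_eq]

lemma hasDerivAt_sub_rpow_div {α a t : ℝ} (hα : α ≠ 0) (ht : a < t) :
    HasDerivAt (fun s => (s - a) ^ α / α) ((t - a) ^ (α - 1)) t :=
  ((((hasDerivAt_id' t).sub_const a).rpow_const (p := α)
    (Or.inl (sub_pos.2 ht).ne')).div_const α).congr_deriv (by field_simp)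

lemma confD_comp_sub_rpow_div {α a t g' : ℝ} {g : ℝ → ℝ} (hα : α ≠ 0) (ht : a < t)
    (hg : HasDerivAt g g' ((t - a) ^ α / α)) :
    confD α a (fun s => g ((s - a) ^ α / α)) t = g' := by
  have hcancel : (t - a) ^ (1 - α) * (t - a) ^ (α - 1) = 1 := by
    rw [← rpow_add (sub_pos.2 ht)]
    simp
  have hcomp : HasDerivAt (fun s => g ((s - a) ^ α / α)) (g' * (t - a) ^ (α - 1)) t :=
    hg.comp t (hasDerivAt_sub_rpow_div hα ht)
  rw [confD, hcomp.deriv, mul_left_comm, hcancel, mul_one]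

lemma confD_mul_sin {α a A ω θ : ℝ} (hα : α ≠ 0) :
    EqOn (confD α a fun s => A * sin (ω * (s - a) ^ α / α + θ))
      (fun s => A * ω * sin (ω * (s - a) ^ α / α + θ + π / 2)) (Ioi a) := fun t ht => by
  have hg : HasDerivAt (fun x => A * sin (ω * x + θ)) (A * (cos (ω * ((t - a) ^ α / α) + θ) * ω))
      ((t - a) ^ α / α) :=
    ((((hasDerivAt_id _).const_mul ω).add_const θ).sin.const_mul A).congr_deriv (by simp)
  simp only [mul_div_assoc, sin_add_pi_div_two]
  rw [confD_comp_sub_rpow_div hα ht hg]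
  ring

lemma iterate_confD_sin {α a ω c : ℝ} (hα : α ≠ 0) (k : ℕ) :
    EqOn ((confD α a)^[k] fun s => sin (ω * (s - a) ^ α / α + c))
      (fun s => ω ^ k * sin (ω * (s - a) ^ α / α + c + k * π / 2)) (Ioi a) := by
  induction k with
  | zero => intro t _; simp
  | succ k ih =>
    intro t ht
    rw [Function.iterate_succ_apply', confD_congr_on_Ioi ih ht]
    simp only [add_assoc]
    rw [confD_mul_sin hα ht]
    push_cast
    ring_nf

lemma tendsto_mul_sin_nhdsGT {α a A ω θ : ℝ} (hα : 0 < α) :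
    Tendsto (fun s => A * sin (ω * (s - a) ^ α / α + θ)) (𝓝[>] a) (𝓝 (A * sin θ)) := by
  have hcont : Continuous fun s => A * sin (ω * (s - a) ^ α / α + θ) := by
    have : Continuous fun s : ℝ => (s - a) ^ α :=
      (continuous_id.sub continuous_const).rpow_const fun _ => Or.inr hα.le
    fun_prop
  simpa [zero_rpow hα.ne'] using hcont.continuousWithinAt (s := Ioi a) (x := a) |>.tendsto

theorem conf_transform_sin (α : ℝ) (hα : α ∈ Set.Ioc (0:ℝ) 1) (ω c t₀ : ℝ) (k : ℕ) :
    (∀ t, t₀ < t →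
      ((confD α t₀)^[k] (fun s => Real.sin (ω * (s - t₀) ^ α / α + c))) t =
        ω ^ k * Real.sin (ω * (t - t₀) ^ α / α + c + (k : ℝ) * Real.pi / 2)) ∧
    Filter.Tendsto
      (fun t => (1 / (α ^ k * (Nat.factorial k : ℝ))) *
        ((confD α t₀)^[k] (fun s => Real.sin (ω * (s - t₀) ^ α / α + c))) t)
      (nhdsWithin t₀ (Set.Ioi t₀))
      (nhds ((ω ^ k / (α ^ k * (Nat.factorial k : ℝ))) * Real.sin ((k : ℝ) * Real.pi / 2 + c))) := by
  have hclosed := iterate_confD_sin (a := t₀) (ω := ω) (c := c) hα.1.ne' k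
  refine ⟨fun t ht => hclosed ht, ?_⟩
  have hlim := (tendsto_mul_sin_nhdsGT (a := t₀) (A := ω ^ k) (ω := ω)
    (θ := k * π / 2 + c) hα.1).const_mul (1 / (α ^ k * (Nat.factorial k : ℝ)))
  rw [← mul_assoc, one_div_mul_eq_div] at hlim
  refine hlim.congr' ?_
  filter_upwards [self_mem_nhdsWithin] with t ht
  rw [hclosed ht]
  ring_nf
end

section
/- For α ∈ (0,1], the function y(t) = t^α/(α - t^α) solves the conformable fractional Riccati equation (T_α y)(t) = 1 + 2y(t) + y(t)² for 0 < t with t^α < α, and y(t) → 0 as t → 0⁺. -/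
/-! With `u = t ^ α` and `y = u / (α - u)` one has `1 + y = α / (α - u)`, so the right-hand side
`1 + 2y + y² = (1 + y)²` is `α² / (α - u)²`. The quotient rule gives `y' = α u' / (α - u)²` with
`u' = α t ^ (α - 1)`, and the conformable factor `t ^ (1 - α)` cancels `t ^ (α - 1)`.
The limit holds because `t ^ α → 0` as `t → 0⁺` for `α > 0`. -/

open Filter Topology

theorem HasDerivAt.div_const_sub {f : ℝ → ℝ} {f' c t : ℝ} (hf : HasDerivAt f f' t)
    (hne : c - f t ≠ 0) :
    HasDerivAt (fun s => f s / (c - f s)) (c * f' / (c - f t) ^ 2) t :=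
  (hf.fun_div (hf.const_sub c) hne).congr_deriv (by ring)

theorem one_add_div_sub {x c : ℝ} (hne : c - x ≠ 0) : 1 + x / (c - x) = c / (c - x) := by
  rw [one_add_div hne, sub_add_cancel]

theorem rpow_one_sub_mul_deriv_rpow_div_sub {α t : ℝ} (ht : 0 < t) (hne : α - t ^ α ≠ 0) :
    t ^ (1 - α) * deriv (fun s : ℝ => s ^ α / (α - s ^ α)) t = (α / (α - t ^ α)) ^ 2 := by
  have hrpow : HasDerivAt (fun s : ℝ => s ^ α) (α * t ^ (α - 1)) t :=
    Real.hasDerivAt_rpow_const (Or.inl ht.ne')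
  have hcancel : t ^ (1 - α) * t ^ (α - 1) = 1 := by
    rw [← Real.rpow_add ht, sub_add_sub_cancel, sub_self, Real.rpow_zero]
  rw [(hrpow.div_const_sub hne).deriv]
  calc t ^ (1 - α) * (α * (α * t ^ (α - 1)) / (α - t ^ α) ^ 2)
      = t ^ (1 - α) * t ^ (α - 1) * (α / (α - t ^ α)) ^ 2 := by rw [div_pow]; ring
    _ = (α / (α - t ^ α)) ^ 2 := by rw [hcancel, one_mul]

theorem tendsto_rpow_div_sub_nhdsGT_zero {α : ℝ} (hα : 0 < α) :
    Tendsto (fun t : ℝ => t ^ α / (α - t ^ α)) (𝓝[>] 0) (𝓝 0) := by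
  have hrpow : Tendsto (fun t : ℝ => t ^ α) (𝓝[>] 0) (𝓝 0) := by
    have hcont := (Real.continuousAt_rpow_const 0 α (Or.inr hα.le)).tendsto
    rw [Real.zero_rpow hα.ne'] at hcont
    exact hcont.mono_left nhdsWithin_le_nhds
  have hden : Tendsto (fun t : ℝ => α - t ^ α) (𝓝[>] 0) (𝓝 α) := by
    simpa only [sub_zero] using tendsto_const_nhds.sub hrpow
  have hquot := hrpow.div hden hα.ne'
  rwa [zero_div] at hquot

theorem conf_riccati_one (α : ℝ) (hα : α ∈ Set.Ioc (0:ℝ) 1) :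
    (∀ t : ℝ, 0 < t → t ^ α < α →
      t ^ (1 - α) * deriv (fun s : ℝ => s ^ α / (α - s ^ α)) t =
        1 + 2 * (t ^ α / (α - t ^ α)) + (t ^ α / (α - t ^ α)) ^ 2) ∧
    Filter.Tendsto (fun t : ℝ => t ^ α / (α - t ^ α))
      (nhdsWithin 0 (Set.Ioi 0)) (nhds 0) := by
  refine ⟨fun t ht htα => ?_, tendsto_rpow_div_sub_nhdsGT_zero hα.1⟩
  have hne : α - t ^ α ≠ 0 := (sub_pos.mpr htα).ne'
  rw [rpow_one_sub_mul_deriv_rpow_div_sub ht hne, ← one_add_div_sub hne]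
  ring
end
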